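/- arXiv:1603.01091 — 5 statements merged into one kernel-verified Lean document; each statement's English description precedes it below -/
import Mathlib

section
/- Let D ⊂ ℂ be open, let Ω ⊂ ℂ be a domain with D ⊂ Ω, let f : D → D be holomorphic, and let E ⊂ D be a finite nonempty set such that dist(f^n(z), ∂_∞Ω) → 0 for every z ∈ E and such that every iterate f^n is injective on E. Then the set of all functions g ∈ H(Ω) such that {g∘f^n|_E : n ∈ ℕ} is dense in C(E) (the space ℂ^E of complex-valued functions on E with the supremum norm) is a comeager subset of H(Ω). -/
open Set Filter Topology Function Metric TopologicalSpace

noncomputable section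

/-- The chordal metric on the Riemann sphere `ℂ_∞ = OnePoint ℂ`. -/
def chordal (x y : OnePoint ℂ) : ℝ :=
  Option.elim x (Option.elim y 0 fun w => 2 / Real.sqrt (1 + ‖w‖ ^ 2))
    fun z => Option.elim y (2 / Real.sqrt (1 + ‖z‖ ^ 2))
      fun w => 2 * ‖z - w‖ / (Real.sqrt (1 + ‖z‖ ^ 2) * Real.sqrt (1 + ‖w‖ ^ 2))

/-- The chordal distance from a point of the Riemann sphere to a set of points. -/
def chordalDistSet (x : OnePoint ℂ) (S : Set (OnePoint ℂ)) : ℝ :=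
  sInf (chordal x '' S)

/-- `M ⊆ ℂ` has no holes iff `ℂ_∞ ∖ M` is connected. -/
def NoHoles (M : Set ℂ) : Prop :=
  IsConnected (((↑) '' M : Set (OnePoint ℂ))ᶜ)

/-- The boundary `∂_∞ Ω` of `Ω ⊆ ℂ` taken in the Riemann sphere. -/
def sphereBoundary (Ω : Set ℂ) : Set (OnePoint ℂ) :=
  frontier ((↑) '' Ω)

/-- `U_0(M)`: the nonempty open subsets of `M` having no holes. -/
def U0 (M : Set ℂ) : Set (Set ℂ) :=
  {U | U.Nonempty ∧ IsOpen U ∧ U ⊆ M ∧ NoHoles U}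

/-- `K_0(M)`: the nonempty compact subsets of `M` having no holes. -/
def K0 (M : Set ℂ) : Set (Set ℂ) :=
  {K | K.Nonempty ∧ IsCompact K ∧ K ⊆ M ∧ NoHoles K}

/-- `H(D)`: holomorphic functions on `D`, with the topology of locally uniform
convergence on `D` (induced from the compact-open topology on `C(D, ℂ)`). -/
def HolFun (D : Set ℂ) : Type := {g : ℂ → ℂ // DifferentiableOn ℂ g D}

instance (D : Set ℂ) : TopologicalSpace (HolFun D) :=
  TopologicalSpace.induced
    (fun g : HolFun D => (⟨D.restrict g.1, g.2.continuousOn.restrict⟩ : C(D, ℂ)))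
    inferInstance

/-- The orbit `{g ∘ f^n |_U : n ∈ ℕ}` is dense in `H(U)`,
i.e. `g` is `H(U)`-universal for the composition operator `C_f`. -/
def DenseOrbitIn (g f : ℂ → ℂ) (U : Set ℂ) : Prop :=
  Dense {h : HolFun U | ∃ n : ℕ, Set.EqOn h.1 (g ∘ f^[n]) U}

/-!
If `w` is chordally close to `∂_∞Ω`, then for a fixed compact `K ⊆ Ω` some function holomorphic on
`Ω` peaks at `w` relative to `K`: either `w` lies far out and `z / w` does, or a finite boundary
point `p` is closer to `w` than to `K` and `(w - p) / (z - p)` does. Multiplying Lagrange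
polynomials by high powers of such peak functions gives holomorphic functions on `Ω` which take
prescribed values at the distinct points `f^n(E)` and are uniformly small on `K`, so for every
nonempty open `V ⊆ ℂ^E` the set `{g | ∃ n, g ∘ f^n|_E ∈ V}` is open and dense in `H(Ω)`.
Intersecting over a countable basis of `ℂ^E` gives the comeager set.
-/

open OnePoint

lemma exists_eq_coe_norm_sub_le_of_chordal_lt {w : ℂ} {R : ℝ} (hw : ‖w‖ ≤ R) {x : OnePoint ℂ}
    (hx : chordal w x < 1 / √(1 + R ^ 2)) :
    ∃ p : ℂ, x = p ∧ ‖w - p‖ ≤ (1 + R) * √(1 + R ^ 2) * chordal w x := by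
  have hR : 0 ≤ R := (norm_nonneg w).trans hw
  have hsw : √(1 + ‖w‖ ^ 2) ≤ √(1 + R ^ 2) := Real.sqrt_le_sqrt (by gcongr)
  cases x with
  | infty =>
    have : 2 / √(1 + R ^ 2) ≤ 2 / √(1 + ‖w‖ ^ 2) := by gcongr
    have : 1 / √(1 + R ^ 2) < 2 / √(1 + R ^ 2) := by gcongr; norm_num
    exact absurd hx (by change ¬(2 / √(1 + ‖w‖ ^ 2) < _); linarith)
  | coe p =>
    refine ⟨p, rfl, ?_⟩
    have hform : chordal w p = 2 * ‖w - p‖ / (√(1 + ‖w‖ ^ 2) * √(1 + ‖p‖ ^ 2)) := rfl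
    rw [hform] at hx ⊢
    set c := 2 * ‖w - p‖ / (√(1 + ‖w‖ ^ 2) * √(1 + ‖p‖ ^ 2))
    have hsp : √(1 + ‖p‖ ^ 2) ≤ 1 + R + ‖w - p‖ := by
      refine Real.sqrt_le_iff.2 ⟨by positivity, ?_⟩
      have : ‖p‖ ≤ R + ‖w - p‖ := (norm_le_norm_add_norm_sub w p).trans (by gcongr)
      nlinarith [norm_nonneg p]
    have hc : 2 * ‖w - p‖ = c * (√(1 + ‖w‖ ^ 2) * √(1 + ‖p‖ ^ 2)) := by
      rw [div_mul_cancel₀]; positivity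
    have hc0 : 0 ≤ c := by positivity
    have hcS : c * √(1 + R ^ 2) ≤ 1 := by
      rw [lt_div_iff₀ (by positivity)] at hx; linarith
    -- `2‖w - p‖ ≤ c √(1+R²) (1 + R + ‖w - p‖) ≤ (1 + R) √(1+R²) c + ‖w - p‖`
    have : c * (√(1 + ‖w‖ ^ 2) * √(1 + ‖p‖ ^ 2)) ≤ c * (√(1 + R ^ 2) * (1 + R + ‖w - p‖)) := by
      gcongr
    nlinarith [norm_nonneg (w - p)]

lemma notMem_of_coe_mem_sphereBoundary {Ω : Set ℂ} (hΩ : IsOpen Ω) {p : ℂ}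
    (hp : (p : OnePoint ℂ) ∈ sphereBoundary Ω) : p ∉ Ω := by
  rw [sphereBoundary, (isOpenEmbedding_coe.isOpenMap _ hΩ).frontier_eq] at hp
  exact fun hpΩ => hp.2 (mem_image_of_mem _ hpΩ)

lemma sphereBoundary_nonempty {Ω : Set ℂ} (hΩ : Ω.Nonempty) : (sphereBoundary Ω).Nonempty := by
  rw [nonempty_iff_ne_empty]
  intro h
  have huniv := (isClopen_iff_frontier_eq_empty.2 h).eq_univ (hΩ.image _)
  obtain ⟨z, -, hz⟩ := huniv.symm ▸ mem_univ (∞ : OnePoint ℂ)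
  exact coe_ne_infty z hz

lemma exists_chordal_lt_of_chordalDistSet_lt {x : OnePoint ℂ} {S : Set (OnePoint ℂ)}
    (hS : S.Nonempty) {δ : ℝ} (h : chordalDistSet x S < δ) : ∃ y ∈ S, chordal x y < δ := by
  obtain ⟨_, ⟨y, hy, rfl⟩, hlt⟩ := exists_lt_of_csInf_lt (hS.image _) h
  exact ⟨y, hy, hlt⟩

theorem exists_peak_near_sphereBoundary {Ω K : Set ℂ} (hΩ : IsOpen Ω) (hK : IsCompact K)
    (hKΩ : K ⊆ Ω) :
    ∃ δ > 0, ∀ w ∈ Ω, chordalDistSet w (sphereBoundary Ω) < δ →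
      ∃ φ : ℂ → ℂ, DifferentiableOn ℂ φ Ω ∧ φ w = 1 ∧ ∀ y ∈ K, ‖φ y‖ < 1 := by
  obtain ⟨R, hR, hKR⟩ := hK.isBounded.exists_pos_norm_le
  obtain ⟨d, hd, hdK⟩ := hK.exists_thickening_subset_open hΩ hKΩ
  have hsep : ∀ y ∈ K, ∀ p ∉ Ω, d ≤ ‖y - p‖ := fun y hy p hp => not_lt.1 fun h =>
    hp (hdK (mem_thickening_iff.2 ⟨y, hy, by rwa [dist_comm, dist_eq_norm]⟩))
  set S := √(1 + R ^ 2)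
  have hS : 0 < S := by positivity
  refine ⟨min (1 / S) (d / ((1 + R) * S)), by positivity, fun w hw hδ => ?_⟩
  by_cases hwR : R < ‖w‖
  · have hw0 : w ≠ 0 := norm_pos_iff.1 (hR.trans hwR)
    refine ⟨fun z => z / w, differentiableOn_id.div_const w, div_self hw0, fun y hy => ?_⟩
    rw [norm_div, div_lt_one (hR.trans hwR)]
    exact (hKR y hy).trans_lt hwR
  obtain ⟨x, hx, hxw⟩ :=
    exists_chordal_lt_of_chordalDistSet_lt (sphereBoundary_nonempty ⟨w, hw⟩) hδ
  obtain ⟨p, rfl, hwp⟩ :=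
    exists_eq_coe_norm_sub_le_of_chordal_lt (not_lt.1 hwR) (hxw.trans_le (min_le_left _ _))
  have hpΩ := notMem_of_coe_mem_sphereBoundary hΩ hx
  have hwp_pos : 0 < ‖w - p‖ := norm_pos_iff.2 (sub_ne_zero.2 fun h => hpΩ (h ▸ hw))
  have hwp_lt : ‖w - p‖ < d := by
    calc ‖w - p‖ ≤ (1 + R) * S * chordal w p := hwp
      _ < (1 + R) * S * (d / ((1 + R) * S)) := by gcongr; exact hxw.trans_le (min_le_right _ _)
      _ = d := by field_simp
  refine ⟨fun z => (w - p) / (z - p), ?_, div_self (norm_pos_iff.1 hwp_pos), fun y hy => ?_⟩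
  · exact (differentiableOn_const _).div (differentiableOn_id.sub_const p)
      fun z hz => sub_ne_zero.2 fun h => hpΩ (h ▸ hz)
  · rw [norm_div, div_lt_one (hwp_pos.trans (hwp_lt.trans_le (hsep y hy p hpΩ)))]
    exact hwp_lt.trans_le (hsep y hy p hpΩ)

theorem IsCompact.exists_forall_norm_mul_pow_le {X 𝕜 : Type*} [TopologicalSpace X]
    [NormedDivisionRing 𝕜] {K : Set X} (hK : IsCompact K) {u v : X → 𝕜} (hu : ContinuousOn u K)
    (hv : ContinuousOn v K) (hv1 : ∀ y ∈ K, ‖v y‖ < 1) {η : ℝ} (hη : 0 < η) :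
    ∃ m : ℕ, ∀ y ∈ K, ‖u y * v y ^ m‖ ≤ η := by
  rcases K.eq_empty_or_nonempty with rfl | hKne
  · exact ⟨0, by simp⟩
  obtain ⟨y₀, hy₀, hmax⟩ := hK.exists_isMaxOn hKne hv.norm
  obtain ⟨C, hC⟩ := hK.exists_bound_of_continuousOn hu
  have hC0 : 0 ≤ C := (norm_nonneg _).trans (hC y₀ hy₀)
  have hlim : Tendsto (fun m : ℕ => C * ‖v y₀‖ ^ m) atTop (𝓝 0) := by
    simpa using (tendsto_pow_atTop_nhds_zero_of_lt_one (norm_nonneg _) (hv1 y₀ hy₀)).const_mul C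
  obtain ⟨m, hm⟩ := (hlim.eventually_lt_const hη).exists
  refine ⟨m, fun y hy => ?_⟩
  calc ‖u y * v y ^ m‖ = ‖u y‖ * ‖v y‖ ^ m := by rw [norm_mul, norm_pow]
    _ ≤ C * ‖v y₀‖ ^ m := by gcongr; exacts [hC y hy, hmax hy]
    _ ≤ η := hm.le

section Interpolation

variable {ι : Type*} [Fintype ι] [DecidableEq ι] {Ω K : Set ℂ} {w : ι → ℂ}

theorem exists_differentiableOn_eq_ite_norm_le (hK : IsCompact K) (hKΩ : K ⊆ Ω)
    (hw : Injective w) {i : ι} {φ : ℂ → ℂ} (hφ : DifferentiableOn ℂ φ Ω) (hφw : φ (w i) = 1)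
    (hφK : ∀ y ∈ K, ‖φ y‖ < 1) {η : ℝ} (hη : 0 < η) :
    ∃ ψ : ℂ → ℂ, DifferentiableOn ℂ ψ Ω ∧ (∀ j, ψ (w j) = if j = i then 1 else 0) ∧
      ∀ y ∈ K, ‖ψ y‖ ≤ η := by
  set L := Lagrange.basis Finset.univ w i
  obtain ⟨m, hm⟩ := hK.exists_forall_norm_mul_pow_le (L.continuous.continuousOn)
    (hφ.continuousOn.mono hKΩ) hφK hη
  refine ⟨fun z => L.eval z * φ z ^ m, L.differentiable.differentiableOn.mul (hφ.pow m),
    fun j => ?_, hm⟩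
  simp only [L]
  split_ifs with hji
  · subst hji
    rw [Lagrange.eval_basis_self hw.injOn (Finset.mem_univ _), hφw, one_pow, one_mul]
  · rw [Lagrange.eval_basis_of_ne (Ne.symm hji) (Finset.mem_univ _), zero_mul]

theorem exists_differentiableOn_interpolating_near (hK : IsCompact K) (hKΩ : K ⊆ Ω)
    {g₀ : ℂ → ℂ} (hg₀ : DifferentiableOn ℂ g₀ Ω) (hw : Injective w)
    (hpeak : ∀ i, ∃ φ : ℂ → ℂ, DifferentiableOn ℂ φ Ω ∧ φ (w i) = 1 ∧ ∀ y ∈ K, ‖φ y‖ < 1)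
    (c : ι → ℂ) {ε : ℝ} (hε : 0 < ε) :
    ∃ h : ℂ → ℂ, DifferentiableOn ℂ h Ω ∧ (∀ y ∈ K, dist (h y) (g₀ y) < ε) ∧
      ∀ i, h (w i) = c i := by
  set a := fun i => c i - g₀ (w i)
  set A := ∑ i, ‖a i‖
  have hA : 0 ≤ A := by positivity
  have hψ : ∀ i, ∃ ψ : ℂ → ℂ, DifferentiableOn ℂ ψ Ω ∧ (∀ j, ψ (w j) = if j = i then 1 else 0) ∧
      ∀ y ∈ K, ‖ψ y‖ ≤ ε / (A + 1) := fun i =>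
    let ⟨_, hφ, hφw, hφK⟩ := hpeak i
    exists_differentiableOn_eq_ite_norm_le hK hKΩ hw hφ hφw hφK (by positivity)
  choose ψ hψΩ hψw hψK using hψ
  refine ⟨fun z => g₀ z + ∑ i, a i * ψ i z,
    hg₀.add (DifferentiableOn.fun_sum fun i _ => (hψΩ i).const_mul (a i)), fun y hy => ?_,
    fun j => by simp [hψw, a]⟩
  calc dist (g₀ y + ∑ i, a i * ψ i y) (g₀ y) = ‖∑ i, a i * ψ i y‖ := by
        rw [dist_eq_norm, add_sub_cancel_left]
    _ ≤ ∑ i, ‖a i‖ * (ε / (A + 1)) := norm_sum_le_of_le _ fun i _ => by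
        rw [norm_mul]; gcongr; exact hψK i y hy
    _ = ε * (A / (A + 1)) := by rw [← Finset.sum_mul]; ring
    _ < ε * 1 := by gcongr; rw [div_lt_one (by positivity)]; linarith
    _ = ε := mul_one ε

end Interpolation

theorem exists_differentiableOn_interpolating_near_sphereBoundary {ι : Type*} [Finite ι]
    {Ω K : Set ℂ} (hΩ : IsOpen Ω) (hK : IsCompact K) (hKΩ : K ⊆ Ω) {g₀ : ℂ → ℂ}
    (hg₀ : DifferentiableOn ℂ g₀ Ω) {w : ℕ → ι → ℂ} (hwΩ : ∀ n i, w n i ∈ Ω)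
    (hw : ∀ n, Injective (w n))
    (hw_lim : ∀ i, Tendsto (fun n => chordalDistSet (w n i) (sphereBoundary Ω)) atTop (𝓝 0))
    (c : ι → ℂ) {ε : ℝ} (hε : 0 < ε) :
    ∃ n, ∃ h : ℂ → ℂ, DifferentiableOn ℂ h Ω ∧ (∀ y ∈ K, dist (h y) (g₀ y) < ε) ∧
      ∀ i, h (w n i) = c i := by
  classical
  have := Fintype.ofFinite ι
  obtain ⟨δ, hδ, hpeak⟩ := exists_peak_near_sphereBoundary hΩ hK hKΩ
  obtain ⟨n, hn⟩ := (eventually_all.2 fun i => (hw_lim i).eventually_lt_const hδ).exists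
  exact ⟨n, exists_differentiableOn_interpolating_near hK hKΩ hg₀ (hw n)
    (fun i => hpeak _ (hwΩ n i) (hn i)) c hε⟩

namespace HolFun

variable {Ω : Set ℂ}

theorem continuous_toContinuousMap :
    Continuous fun g : HolFun Ω =>
      (⟨fun z : Ω => g.1 z, g.2.continuousOn.domRestrict⟩ : C(Ω, ℂ)) :=
  continuous_induced_dom

theorem continuous_apply {w : ℂ} (hw : w ∈ Ω) : Continuous fun g : HolFun Ω => g.1 w :=
  (continuous_eval_const ⟨w, hw⟩).comp continuous_toContinuousMap

theorem exists_isCompact_setOf_dist_lt_subset {g₀ : HolFun Ω} {t : Set (HolFun Ω)}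
    (ht : t ∈ 𝓝 g₀) : ∃ K ⊆ Ω, IsCompact K ∧ ∃ ε > 0,
      {g : HolFun Ω | ∀ y ∈ K, dist (g.1 y) (g₀.1 y) < ε} ⊆ t := by
  rw [nhds_induced] at ht
  obtain ⟨V, hV, hVt⟩ := mem_comap.1 ht
  obtain ⟨⟨K, ε⟩, ⟨hK, hε⟩, hKV⟩ :=
    (nhds_basis_uniformity' uniformity_basis_dist.compactConvergenceUniformity).mem_iff.1 hV
  refine ⟨(↑) '' K, Subtype.coe_image_subset Ω K, hK.image continuous_subtype_val, ε, hε,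
    fun g hg => hVt (hKV fun x hx => ?_)⟩
  rw [mem_ofPred_eq, dist_comm]
  exact hg x ⟨x, hx, rfl⟩

theorem dense_iUnion_preimage_eval {ι : Type*} [Finite ι] (hΩ : IsOpen Ω) {w : ℕ → ι → ℂ}
    (hwΩ : ∀ n i, w n i ∈ Ω) (hw : ∀ n, Injective (w n))
    (hw_lim : ∀ i, Tendsto (fun n => chordalDistSet (w n i) (sphereBoundary Ω)) atTop (𝓝 0))
    {V : Set (ι → ℂ)} (hV : V.Nonempty) :
    Dense (⋃ n, (fun (g : HolFun Ω) i => g.1 (w n i)) ⁻¹' V) := by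
  obtain ⟨c, hc⟩ := hV
  rw [dense_iff_inter_open]
  rintro t ht ⟨g₀, hg₀⟩
  obtain ⟨K, hKΩ, hK, ε, hε, hKt⟩ := exists_isCompact_setOf_dist_lt_subset (ht.mem_nhds hg₀)
  obtain ⟨n, h, hh, hhK, hhw⟩ := exists_differentiableOn_interpolating_near_sphereBoundary
    hΩ hK hKΩ g₀.2 hwΩ hw hw_lim c hε
  refine ⟨⟨h, hh⟩, hKt hhK, mem_iUnion.2 ⟨n, ?_⟩⟩
  change (fun i => h (w n i)) ∈ V
  simpa only [hhw] using hc

end HolFun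

theorem residual_setOf_dense_range {X Y : Type*} [TopologicalSpace X] [TopologicalSpace Y]
    [SecondCountableTopology Y] {T : ℕ → X → Y} (hT : ∀ n, Continuous (T n))
    (hdense : ∀ V : Set Y, IsOpen V → V.Nonempty → Dense (⋃ n, T n ⁻¹' V)) :
    {x | Dense (range fun n => T n x)} ∈ residual X := by
  have hB := isBasis_countableBasis Y
  have hset : {x | Dense (range fun n => T n x)} = ⋂ V ∈ countableBasis Y, ⋃ n, T n ⁻¹' V := by
    ext x
    simp only [mem_ofPred_eq, hB.dense_iff, mem_iInter₂, mem_iUnion, mem_preimage]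
    refine forall₂_congr fun V hV => ⟨fun h => ?_, fun ⟨n, hn⟩ _ => ⟨_, hn, n, rfl⟩⟩
    obtain ⟨_, hy, n, rfl⟩ := h (nonempty_of_mem_countableBasis hV)
    exact ⟨n, hy⟩
  rw [hset]
  exact (countable_bInter_mem (countable_countableBasis Y)).2 fun V hV =>
    residual_of_dense_open (isOpen_iUnion fun n => (hB.isOpen hV).preimage (hT n))
      (hdense V (hB.isOpen hV) (nonempty_of_mem_countableBasis hV))

theorem universality_comeager_finite_set_general
    (D Ω : Set ℂ) (hΩopen : IsOpen Ω)
    (hDΩ : D ⊆ Ω)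
    (f : ℂ → ℂ) (hfD : MapsTo f D D)
    (E : Set ℂ) (hED : E ⊆ D) (hEfin : E.Finite)
    (hrun : ∀ z ∈ E, Tendsto
      (fun n : ℕ => chordalDistSet ((f^[n] z : ℂ) : OnePoint ℂ) (sphereBoundary Ω))
      atTop (𝓝 0))
    (hinj : ∀ n : ℕ, Set.InjOn (f^[n]) E) :
    {g : HolFun Ω |
        Dense {h : ↥E → ℂ | ∃ n : ℕ, ∀ z : ↥E, h z = g.1 (f^[n] (z : ℂ))}}
      ∈ residual (HolFun Ω) := by
  have := hEfin.to_subtype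
  have hiter : ∀ n (z : E), f^[n] z ∈ Ω := fun n z => hDΩ (hfD.iterate n (hED z.2))
  have hdense := residual_setOf_dense_range
    (fun n => continuous_pi fun z => HolFun.continuous_apply (hiter n z))
    fun V _ hV => HolFun.dense_iUnion_preimage_eval hΩopen hiter
      (fun n a b hab => Subtype.ext (hinj n a.2 b.2 hab)) (fun z => hrun z z.2) hV
  refine mem_of_superset hdense fun g hg => hg.mono ?_
  rintro _ ⟨n, rfl⟩
  exact ⟨n, fun z => rfl⟩

/-- If `E ⊆ D` is finite and nonempty, `dist(f^n(z), ∂_∞Ω) → 0` for every `z ∈ E`,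
and every iterate `f^n` is injective on `E`, then the set of `g ∈ H(Ω)` such that
`{g∘f^n|_E : n ∈ ℕ}` is dense in `C(E)` is comeager in `H(Ω)`. -/
theorem universality_comeager_finite_set
    (D Ω : Set ℂ) (hD : IsOpen D) (hΩopen : IsOpen Ω) (hΩconn : IsConnected Ω)
    (hDΩ : D ⊆ Ω)
    (f : ℂ → ℂ) (hf : DifferentiableOn ℂ f D) (hfD : MapsTo f D D)
    (E : Set ℂ) (hED : E ⊆ D) (hEfin : E.Finite) (hEne : E.Nonempty)
    (hrun : ∀ z ∈ E, Tendsto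
      (fun n : ℕ => chordalDistSet ((f^[n] z : ℂ) : OnePoint ℂ) (sphereBoundary Ω))
      atTop (𝓝 0))
    (hinj : ∀ n : ℕ, Set.InjOn (f^[n]) E) :
    {g : HolFun Ω |
        Dense {h : ↥E → ℂ | ∃ n : ℕ, ∀ z : ↥E, h z = g.1 (f^[n] (z : ℂ))}}
      ∈ residual (HolFun Ω) :=
  universality_comeager_finite_set_general D Ω hΩopen hDΩ f hfD E hED hEfin hrun hinj
end
end

section
/- In the Böttcher setting, let δ > 0 with U_δ[0] ⊂ V and let E ⊂ B_δ°∖{z0} be a finite nonempty set such that every iterate f^n is injective on E. Then the set of all functions g ∈ H(ℂ∖{z0}) such that {g∘f^n|_E : n ∈ ℕ} is dense in C(E) (the space ℂ^E with the supremum norm) is a comeager subset of H(ℂ∖{z0}). -/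
open Set Filter Topology Function Metric TopologicalSpace

noncomputable section

/-- In the Böttcher setting, the compact neighbourhood `B_δ = φ⁻¹(U_δ[0])` of the
superattracting fixed point. -/
def Bdelta (U : Set ℂ) (φ : ℂ → ℂ) (δ : ℝ) : Set ℂ :=
  {z ∈ U | φ z ∈ Metric.closedBall (0 : ℂ) δ}

/-- The Gaussian rationals `ℚ + iℚ`. -/
def ratGauss : Set ℂ := {z : ℂ | ∃ q r : ℚ, z = (q : ℂ) + (r : ℂ) * Complex.I}

/-! Since `φ (f^[n] z) = φ z ^ p ^ n` with `‖φ z‖ < 1`, the orbits of the finitely many points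
of `E` converge to `z0` while staying pairwise distinct and different from `z0`. Given target
values on `E` and a compact `K ⊆ ℂ ∖ {z0}`, once the orbit points are closer to `z0` than `K` is,
a polynomial in `(ζ - z0)⁻¹` corrects any `g` at the orbit points while changing it by less
than any `η` on `K`. So for each open `W ⊆ ℂ^E` the functions `g` with some `g ∘ f^[n]|_E ∈ W`
form a dense open set, and intersecting over a countable basis of `ℂ^E` gives a comeager set
of universal functions. -/

open Polynomial in
theorem exists_polynomial_interpolating_small_on_closedBall {𝕜 ι : Type*}
    [NontriviallyNormedField 𝕜] [ProperSpace 𝕜] [Fintype ι]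
    {w : ι → 𝕜} (hw : Injective w) (c : ι → 𝕜) {R η : ℝ} (hR : 0 ≤ R)
    (hRw : ∀ j, R < ‖w j‖) (hη : 0 < η) :
    ∃ P : 𝕜[X], (∀ j, P.eval (w j) = c j) ∧ ∀ v ∈ closedBall (0 : 𝕜) R, ‖P.eval v‖ < η := by
  classical
  have hw0 : ∀ j, w j ≠ 0 := fun j => norm_pos_iff.mp (hR.trans_lt (hRw j))
  set ℓ : ι → 𝕜[X] := Lagrange.basis Finset.univ w
  have hℓ : ∀ j, ∃ M, ∀ v ∈ closedBall (0 : 𝕜) R, ‖(ℓ j).eval v‖ ≤ M := fun j =>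
    (isCompact_closedBall 0 R).exists_bound_of_continuousOn (ℓ j).continuous.continuousOn
  choose M hM using hℓ
  -- the factor `(v / w j) ^ m` keeps the nodal values and decays geometrically on the ball
  let P : ℕ → 𝕜[X] := fun m => ∑ j, C (c j / w j ^ m) * X ^ m * ℓ j
  have hbound : ∀ m, ∀ v ∈ closedBall (0 : 𝕜) R,
      ‖(P m).eval v‖ ≤ ∑ j, ‖c j‖ * (R / ‖w j‖) ^ m * M j := by
    intro m v hv
    simp only [P, eval_finsetSum, eval_mul, eval_C, eval_pow, eval_X]
    refine (norm_sum_le _ _).trans (Finset.sum_le_sum fun j _ => ?_)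
    rw [norm_mul, norm_mul, norm_div, norm_pow, norm_pow, div_mul_eq_mul_div, mul_div_assoc,
      ← div_pow]
    have hv' : ‖v‖ ≤ R := by simpa using hv
    gcongr
    exact hM j v hv
  have hlim : Tendsto (fun m : ℕ => ∑ j, ‖c j‖ * (R / ‖w j‖) ^ m * M j) atTop (𝓝 0) := by
    simpa using tendsto_finsetSum Finset.univ fun j _ =>
      ((tendsto_pow_atTop_nhds_zero_of_lt_one (by positivity)
        ((div_lt_one ((hR.trans_lt (hRw j)))).mpr (hRw j))).const_mul ‖c j‖).mul_const (M j)
  obtain ⟨m, hm⟩ := (hlim.eventually (gt_mem_nhds hη)).exists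
  refine ⟨P m, fun k => ?_, fun v hv => (hbound m v hv).trans_lt hm⟩
  simp only [P, eval_finsetSum, eval_mul, eval_C, eval_pow, eval_X]
  rw [Finset.sum_eq_single k]
  · rw [Lagrange.eval_basis_self hw.injOn (Finset.mem_univ k),
      div_mul_cancel₀ _ (pow_ne_zero _ (hw0 k)), mul_one]
  · intro j _ hjk
    rw [Lagrange.eval_basis_of_ne hjk (Finset.mem_univ k), mul_zero]
  · simp

theorem residual_setOf_denseRange {X Y : Type*} [TopologicalSpace X] [TopologicalSpace Y]
    [SecondCountableTopology Y] {T : ℕ → X → Y} (hT : ∀ n, Continuous (T n))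
    (hdense : ∀ W : Set Y, IsOpen W → W.Nonempty → Dense {x | ∃ n, T n x ∈ W}) :
    {x | DenseRange fun n => T n x} ∈ residual X := by
  set B := countableBasis Y
  have hB := isBasis_countableBasis Y
  have hres : (⋂ W ∈ {W ∈ B | W.Nonempty}, {x | ∃ n, T n x ∈ W}) ∈ residual X :=
    (countable_bInter_mem ((countable_countableBasis Y).mono fun _ h => h.1)).mpr
      fun W hW => residual_of_dense_open
        (by rw [ofPred_exists]; exact isOpen_iUnion fun n => (hB.isOpen hW.1).preimage (hT n))
        (hdense W (hB.isOpen hW.1) hW.2)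
  refine mem_of_superset hres fun x hx => ?_
  rw [mem_ofPred_eq, DenseRange, hB.dense_iff]
  intro W hW hWne
  obtain ⟨n, hn⟩ := mem_iInter₂.mp hx W ⟨hW, hWne⟩
  exact ⟨T n x, hn, n, rfl⟩

theorem tendsto_of_injOn_of_tendsto_comp {φ : ℂ → ℂ} {U : Set ℂ} (hU : IsOpen U)
    (hφ : DifferentiableOn ℂ φ U) (hinj : InjOn φ U) {z₀ : ℂ} (hz₀ : z₀ ∈ U) {α : Type*}
    {l : Filter α} {x : α → ℂ} (hxU : ∀ᶠ a in l, x a ∈ U)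
    (hφx : Tendsto (φ ∘ x) l (𝓝 (φ z₀))) : Tendsto x l (𝓝 z₀) := by
  rcases (hφ.analyticAt (hU.mem_nhds hz₀)).eventually_constant_or_nhds_le_map_nhds with
    hconst | hopen
  · obtain ⟨y, ⟨hφy, hyU⟩, hyz₀⟩ :=
      (((hconst.and (hU.mem_nhds hz₀)).filter_mono nhdsWithin_le_nhds).and
        (self_mem_nhdsWithin (s := {z₀}ᶜ))).exists
    exact absurd (hinj hyU hz₀ hφy) hyz₀
  · intro s hs
    have himage : φ '' (s ∩ U) ∈ 𝓝 (φ z₀) :=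
      hopen (image_mem_map (inter_mem hs (hU.mem_nhds hz₀)))
    rw [mem_map]
    filter_upwards [hφx.eventually_mem himage, hxU] with a ⟨y, ⟨hys, hyU⟩, hφy⟩ hxa
    rwa [mem_preimage, ← hinj hyU hxa hφy]

theorem map_iterate_eq_pow {α M : Type*} [Monoid M] {f : α → α} {φ : α → M} {U : Set α}
    (hfU : MapsTo f U U) {p : ℕ} (hconj : ∀ z ∈ U, φ (f z) = φ z ^ p) {z : α} (hz : z ∈ U)
    (n : ℕ) :
    φ (f^[n] z) = φ z ^ p ^ n := by
  induction n with
  | zero => simp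
  | succ n ih => rw [iterate_succ_apply', hconj _ (hfU.iterate n hz), ih, ← pow_mul, ← pow_succ]

theorem tendsto_iterate_of_conj_pow {f φ : ℂ → ℂ} {U : Set ℂ} (hU : IsOpen U)
    (hfU : MapsTo f U U) (hφ : DifferentiableOn ℂ φ U) (hinj : InjOn φ U) {z₀ : ℂ}
    (hz₀ : z₀ ∈ U) (hφ0 : φ z₀ = 0) {p : ℕ} (hp : 1 < p) (hconj : ∀ z ∈ U, φ (f z) = φ z ^ p)
    {z : ℂ} (hz : z ∈ U) (hφz : ‖φ z‖ < 1) : Tendsto (fun n => f^[n] z) atTop (𝓝 z₀) := by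
  refine tendsto_of_injOn_of_tendsto_comp hU hφ hinj hz₀
    (Eventually.of_forall fun n => hfU.iterate n hz) ?_
  simp only [comp_def, map_iterate_eq_pow hfU hconj hz, hφ0]
  exact (tendsto_pow_atTop_nhds_zero_of_norm_lt_one hφz).comp
    (tendsto_pow_atTop_atTop_of_one_lt hp)

namespace HolFun

def toContinuousMap {D : Set ℂ} (g : HolFun D) : C(D, ℂ) :=
  ⟨D.domRestrict g.1, g.2.continuousOn.domRestrict⟩

theorem isInducing_toContinuousMap {D : Set ℂ} : IsInducing (toContinuousMap (D := D)) :=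
  ⟨rfl⟩

theorem continuous_apply_s7 {D : Set ℂ} {z : ℂ} (hz : z ∈ D) :
    Continuous fun g : HolFun D => g.1 z :=
  (continuous_eval_const (⟨z, hz⟩ : D)).comp isInducing_toContinuousMap.continuous

theorem dense_of_forall_exists_dist_lt {D : Set ℂ} {S : Set (HolFun D)}
    (h : ∀ g₀ : HolFun D, ∀ K ⊆ D, IsCompact K → ∀ η > 0,
      ∃ g ∈ S, ∀ x ∈ K, dist (g₀.1 x) (g.1 x) < η) :
    Dense S := by
  intro g₀
  rw [mem_closure_iff_nhds_basis (isInducing_toContinuousMap.basis_nhds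
    (nhds_basis_uniformity' ContinuousMap.hasBasis_compactConvergenceUniformity))]
  rintro ⟨K, W⟩ ⟨hK, hW⟩
  obtain ⟨η, hη, hηW⟩ := Metric.mem_uniformity_dist.mp hW
  obtain ⟨g, hgS, hg⟩ := h g₀ (Subtype.val '' K) (image_subset_iff.mpr fun x _ => x.2)
    (hK.image continuous_subtype_val) η hη
  exact ⟨g, hgS, fun x hx => hηW (hg x ⟨x, hx, rfl⟩)⟩

theorem dense_setOf_exists_apply_eq_of_tendsto {ι : Type*} [Finite ι] {z₀ : ℂ}
    {a : ℕ → ι → ℂ} (ha_inj : ∀ n, Injective (a n)) (ha_ne : ∀ n j, a n j ≠ z₀)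
    (ha_lim : ∀ j, Tendsto (fun n => a n j) atTop (𝓝 z₀)) (y : ι → ℂ) :
    Dense {g : HolFun {z₀}ᶜ | ∃ n, ∀ j, g.1 (a n j) = y j} := by
  have := Fintype.ofFinite ι
  refine dense_of_forall_exists_dist_lt fun g₀ K hKD hK η hη => ?_
  obtain ⟨d, hd, hdK⟩ : ∃ d > 0, ball z₀ d ⊆ Kᶜ :=
    Metric.mem_nhds_iff.mp (hK.isClosed.isOpen_compl.mem_nhds fun h => hKD h rfl)
  obtain ⟨n, hn⟩ :=
    (eventually_all.mpr fun j => (ha_lim j).eventually (ball_mem_nhds z₀ hd)).exists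
  -- in the coordinate `(ζ - z₀)⁻¹` the nodes lie outside the ball of radius `d⁻¹` containing `K`
  set w : ι → ℂ := fun j => (a n j - z₀)⁻¹
  have hw : Injective w := fun i j h => ha_inj n (sub_left_inj.mp (inv_injective h))
  have hRw : ∀ j, d⁻¹ < ‖w j‖ := fun j => by
    rw [norm_inv, ← dist_eq_norm]
    exact inv_strictAnti₀ (dist_pos.mpr (ha_ne n j)) (hn j)
  obtain ⟨P, hPw, hPsmall⟩ := exists_polynomial_interpolating_small_on_closedBall hw
    (fun j => y j - g₀.1 (a n j)) (inv_nonneg.mpr hd.le) hRw hη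
  have hPd : DifferentiableOn ℂ (fun ζ => P.eval (ζ - z₀)⁻¹) {z₀}ᶜ :=
    P.differentiable.comp_differentiableOn
      ((differentiableOn_id.sub_const z₀).inv fun _ hx => sub_ne_zero.mpr hx)
  refine ⟨⟨fun ζ => g₀.1 ζ + P.eval (ζ - z₀)⁻¹, g₀.2.add hPd⟩, ⟨n, fun j => ?_⟩, fun x hx => ?_⟩
  · show g₀.1 (a n j) + P.eval (w j) = y j
    rw [hPw, add_sub_cancel]
  · have hxd : d ≤ ‖x - z₀‖ := by
      simpa [dist_eq_norm] using (fun h => hdK h hx : x ∉ ball z₀ d)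
    rw [dist_self_add_right]
    refine hPsmall _ ?_
    rw [mem_closedBall_zero_iff, norm_inv]
    exact inv_anti₀ hd hxd

end HolFun

theorem universality_comeager_superattracting_finite_general
    (z0 : ℂ) (U V : Set ℂ) (hU : IsOpen U)
    (hz0U : z0 ∈ U) (hV1 : V ⊆ Metric.ball (0 : ℂ) 1)
    (f : ℂ → ℂ) (hfU : MapsTo f U U)
    (p : ℕ) (hp : 2 ≤ p)
    (φ : ℂ → ℂ) (hφd : DifferentiableOn ℂ φ U) (hφb : Set.BijOn φ U V)
    (hφ0 : φ z0 = 0) (hconj : ∀ z ∈ U, φ (f z) = (φ z) ^ p)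
    (δ : ℝ)
    (E : Set ℂ) (hE : E ⊆ interior (Bdelta U φ δ) \ {z0})
    (hEfin : E.Finite)
    (hinj : ∀ n : ℕ, Set.InjOn (f^[n]) E) :
    {g : HolFun ({z0}ᶜ) |
        Dense {h : ↥E → ℂ | ∃ n : ℕ, ∀ z : ↥E, h z = g.1 (f^[n] (z : ℂ))}}
      ∈ residual (HolFun ({z0}ᶜ)) := by
  have := hEfin.to_subtype
  have hEU : ∀ z ∈ E, z ∈ U := fun z hz => (interior_subset (hE hz).1).1
  have hne : ∀ n, ∀ z ∈ E, f^[n] z ≠ z0 := fun n z hz h => by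
    have hφz : φ z ≠ 0 := fun h0 => (hE hz).2 (hφb.injOn (hEU z hz) hz0U (h0.trans hφ0.symm))
    exact pow_ne_zero _ hφz (by rw [← map_iterate_eq_pow hfU hconj (hEU z hz), h, hφ0])
  have hlim : ∀ z ∈ E, Tendsto (fun n => f^[n] z) atTop (𝓝 z0) := fun z hz =>
    tendsto_iterate_of_conj_pow hU hfU hφd hφb.injOn hz0U hφ0 hp hconj (hEU z hz)
      (mem_ball_zero_iff.mp (hV1 (hφb.mapsTo (hEU z hz))))
  refine mem_of_superset (residual_setOf_denseRange (T := fun n g (z : E) => g.1 (f^[n] z))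
    (fun n => continuous_pi fun z : E => HolFun.continuous_apply_s7 (hne n z z.2))
    fun W _ ⟨y, hy⟩ => ?_) fun g hg => ?_
  · refine Dense.mono ?_ (HolFun.dense_setOf_exists_apply_eq_of_tendsto
      (a := fun n (z : E) => f^[n] z) (fun n a b h => Subtype.ext (hinj n a.2 b.2 h))
      (fun n z => hne n z z.2) (fun z => hlim z z.2) y)
    rintro g ⟨n, hn⟩
    exact ⟨n, by simpa only [← funext hn] using hy⟩
  · exact hg.mono (by rintro _ ⟨n, rfl⟩; exact ⟨n, fun _ => rfl⟩)

/-- Böttcher setting: for a finite nonempty set `E ⊆ B_δ° ∖ {z0}` on which all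
iterates of `f` are injective, the set of `g ∈ H(ℂ∖{z0})` such that
`{g∘f^n|_E : n ∈ ℕ}` is dense in `C(E)` is comeager in `H(ℂ∖{z0})`. -/
theorem universality_comeager_superattracting_finite
    (z0 : ℂ) (U V : Set ℂ) (hU : IsOpen U) (hV : IsOpen V)
    (hz0U : z0 ∈ U) (h0V : (0 : ℂ) ∈ V) (hV1 : V ⊆ Metric.ball (0 : ℂ) 1)
    (f : ℂ → ℂ) (hf : DifferentiableOn ℂ f U) (hfU : MapsTo f U U)
    (hfix : f z0 = z0) (hder : deriv f z0 = 0)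
    (hnc : ¬ ∃ c : ℂ, ∀ z ∈ U, f z = c)
    (p : ℕ) (hp : 2 ≤ p)
    (φ : ℂ → ℂ) (hφd : DifferentiableOn ℂ φ U) (hφb : Set.BijOn φ U V)
    (hφ0 : φ z0 = 0) (hconj : ∀ z ∈ U, φ (f z) = (φ z) ^ p)
    (δ : ℝ) (hδ : 0 < δ) (hδV : Metric.closedBall (0 : ℂ) δ ⊆ V)
    (E : Set ℂ) (hE : E ⊆ interior (Bdelta U φ δ) \ {z0})
    (hEfin : E.Finite) (hEne : E.Nonempty)
    (hinj : ∀ n : ℕ, Set.InjOn (f^[n]) E) :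
    {g : HolFun ({z0}ᶜ) |
        Dense {h : ↥E → ℂ | ∃ n : ℕ, ∀ z : ↥E, h z = g.1 (f^[n] (z : ℂ))}}
      ∈ residual (HolFun ({z0}ᶜ)) :=
  universality_comeager_superattracting_finite_general z0 U V hU hz0U hV1 f hfU p hp φ hφd hφb hφ0
    hconj δ E hE hEfin hinj
end
end

section
/- In the Böttcher setting with δ > 0 such that U_δ[0] ⊂ V: the collection E_δ of all finite nonempty subsets of (B_δ°∖{z0}) ∩ (ℚ+iℚ) on which every iterate f^n is injective is dense in the complete metric space (K(B_δ), d_{K(B_δ)}) of nonempty compact subsets of B_δ with the Hausdorff distance, and the collection K(B_δ°∖{z0}) of nonempty compact subsets of B_δ°∖{z0} is open and dense in (K(B_δ), d_{K(B_δ)}). -/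
/-!
Since `φ` is holomorphic and injective it is an open map, so every point of `B_δ` is a limit
of points of the open set `{z ∈ U : 0 < ‖φ z‖ < δ} ⊆ B_δ° ∖ {z0}` at which `‖φ z‖` avoids any
prescribed finite set of values; as `ℚ + iℚ` is dense, such points may be taken Gaussian
rational. Replacing the points of a finite `r`-net of a compact set one at a time by such points
yields a finite set of Gaussian rationals, Hausdorff-close to it, on which `‖φ‖` is injective.
Because `‖φ (f^[n] z)‖ = ‖φ z‖ ^ p ^ n`, every iterate `f^[n]` is injective there as well.
Openness of `K(B_δ° ∖ {z0})` is the openness of `{K | K ⊆ O}`, `O` open, in the Vietoris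
topology, which is the Hausdorff-metric topology on nonempty compacts.
-/

open Set Filter Topology Function Metric TopologicalSpace

noncomputable section

theorem dense_ratGauss : Dense ratGauss := by
  have hrange : ratGauss =
      range (Complex.equivRealProdCLM.symm ∘ Prod.map ((↑) : ℚ → ℝ) ((↑) : ℚ → ℝ)) := by
    ext z
    simp [ratGauss, Complex.equivRealProdCLM_symm_apply, eq_comm]
  rw [hrange]
  exact Complex.equivRealProdCLM.symm.surjective.denseRange.comp
    (Rat.denseRange_cast.prodMap Rat.denseRange_cast) (by fun_prop)

theorem dense_setOf_norm_notMem {E : Type*} [NormedAddCommGroup E] [NormedSpace ℝ E]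
    [Nontrivial E] [CompleteSpace E] {C : Set ℝ} (hC : C.Countable) :
    Dense {x : E | ‖x‖ ∉ C} := by
  have h : {x : E | ‖x‖ ∉ C} = ⋂ t ∈ C, (sphere 0 t)ᶜ := by
    ext x
    simpa using ⟨fun h t ht e => h (e ▸ ht), fun h hx => h _ hx rfl⟩
  rw [h]
  exact dense_biInter_of_isOpen (fun t _ => isClosed_sphere.isOpen_compl) hC
    (fun t _ => interior_eq_empty_iff_dense_compl.1 (interior_sphere' 0 t))

theorem AnalyticAt.nhds_le_map_nhds_of_injOn {E : Type*} [NormedAddCommGroup E]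
    [NormedSpace ℂ E] [Nontrivial E] {g : E → ℂ} {z : E} {s : Set E} (hg : AnalyticAt ℂ g z)
    (hs : s ∈ 𝓝 z) (hinj : InjOn g s) : 𝓝 (g z) ≤ map g (𝓝 z) := by
  refine hg.eventually_constant_or_nhds_le_map_nhds.resolve_left fun hconst => ?_
  have : ∀ᶠ y in 𝓝[≠] z, (g y = g z ∧ y ∈ s) ∧ y ≠ z :=
    ((hconst.and hs).filter_mono nhdsWithin_le_nhds).and self_mem_nhdsWithin
  obtain ⟨y, ⟨hgy, hys⟩, hyz⟩ := this.exists
  exact hyz (hinj hys (mem_of_mem_nhds hs) hgy)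

theorem mem_closure_preimage_of_nhds_le_map {X Y : Type*} [TopologicalSpace X]
    [TopologicalSpace Y] {g : X → Y} {x : X} (hx : 𝓝 (g x) ≤ map g (𝓝 x)) {s : Set Y}
    (hs : g x ∈ closure s) : x ∈ closure (g ⁻¹' s) := by
  refine mem_closure_iff_nhds.2 fun t ht => ?_
  obtain ⟨_, ⟨y, hyt, rfl⟩, hys⟩ := mem_closure_iff_nhds.1 hs _ (hx (image_mem_map ht))
  exact ⟨y, hyt, hys⟩

theorem apply_iterate_eq_pow_pow {α M : Type*} [Monoid M] {U : Set α} {f : α → α}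
    {φ : α → M} {p : ℕ} (hfU : MapsTo f U U) (hconj : ∀ z ∈ U, φ (f z) = φ z ^ p) (n : ℕ) :
    ∀ z ∈ U, φ (f^[n] z) = φ z ^ p ^ n := by
  induction n with
  | zero => simp
  | succ n ih =>
    intro z hz
    rw [iterate_succ_apply, ih _ (hfU hz), hconj z hz, ← pow_mul, pow_succ']

theorem injOn_iterate_of_injOn_norm {α 𝕜 : Type*} [NormedDivisionRing 𝕜] {U S : Set α}
    {f : α → α} {φ : α → 𝕜} {p : ℕ} (hfU : MapsTo f U U)
    (hconj : ∀ z ∈ U, φ (f z) = φ z ^ p) (hp : p ≠ 0) (hSU : S ⊆ U)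
    (hS : InjOn (fun z => ‖φ z‖) S) (n : ℕ) : InjOn f^[n] S := by
  intro a ha b hb hab
  have hpow : ‖φ a‖ ^ p ^ n = ‖φ b‖ ^ p ^ n := by
    rw [← norm_pow, ← norm_pow, ← apply_iterate_eq_pow_pow hfU hconj n a (hSU ha),
      ← apply_iterate_eq_pow_pow hfU hconj n b (hSU hb), hab]
  exact hS ha hb ((pow_left_inj₀ (norm_nonneg _) (norm_nonneg _) (pow_ne_zero n hp)).1 hpow)

section FiniteApproximation

variable {X β : Type*} [MetricSpace X] {G : Set X} {ν : X → β}

theorem exists_near_injOn_comp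
    (h : ∀ x : X, ∀ r > 0, ∀ C : Set β, C.Finite → ∃ z ∈ G, dist z x < r ∧ ν z ∉ C)
    {r : ℝ} (hr : 0 < r) (T : Finset X) :
    ∃ g : X → X, (∀ t ∈ T, g t ∈ G ∧ dist (g t) t < r) ∧ InjOn (ν ∘ g) T := by
  classical
  induction T using Finset.induction_on with
  | empty => exact ⟨id, by simp, by simp⟩
  | insert t T htT ih =>
    obtain ⟨g, hg, hinj⟩ := ih
    obtain ⟨z, hzG, hzt, hzC⟩ := h t r hr ((ν ∘ g) '' T) (T.finite_toSet.image _)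
    have hupd : EqOn (ν ∘ g) (ν ∘ update g t z) T := fun s hs => by
      simp [update_of_ne (ne_of_mem_of_not_mem hs htT)]
    refine ⟨update g t z, ?_, ?_⟩
    · simp only [Finset.forall_mem_insert, update_self]
      exact ⟨⟨hzG, hzt⟩, fun s hs => by
        simpa [update_of_ne (ne_of_mem_of_not_mem hs htT)] using hg s hs⟩
    · rw [Finset.coe_insert, injOn_insert (by simpa using htT), ← hupd.image_eq]
      exact ⟨hinj.congr hupd, by simpa using hzC⟩

theorem NonemptyCompacts.dense_setOf_finite_subset_injOn
    (h : ∀ x : X, ∀ r > 0, ∀ C : Set β, C.Finite → ∃ z ∈ G, dist z x < r ∧ ν z ∉ C) :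
    Dense {K : NonemptyCompacts X | (K : Set X).Finite ∧ (K : Set X) ⊆ G ∧ InjOn ν K} := by
  refine Metric.dense_iff.2 fun K r hr => ?_
  have hr3 : 0 < r / 3 := by positivity
  obtain ⟨T, hTK, hKT⟩ := K.isCompact.elim_nhds_subcover _ fun x _ => ball_mem_nhds x hr3
  obtain ⟨g, hg, hinj⟩ := exists_near_injOn_comp h hr3 T
  have hT : (T : Set X).Nonempty := by
    obtain ⟨t, ht, -⟩ := nonempty_biUnion.1 (K.nonempty.mono hKT)
    exact ⟨t, ht⟩
  let S : NonemptyCompacts X := ⟨⟨g '' T, (T.finite_toSet.image g).isCompact⟩, hT.image g⟩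
  have hSK : hausdorffDist (S : Set X) K ≤ 2 * r / 3 := by
    refine hausdorffDist_le_of_mem_dist (by positivity) ?_ fun x hx => ?_
    · rintro _ ⟨t, ht, rfl⟩
      exact ⟨t, hTK t ht, by linarith [(hg t ht).2]⟩
    · obtain ⟨t, ht, hxt⟩ := mem_iUnion₂.1 (hKT hx)
      refine ⟨g t, mem_image_of_mem g ht, ?_⟩
      linarith [dist_triangle x t (g t), dist_comm t (g t), mem_ball.1 hxt, (hg t ht).2]
  refine ⟨S, ?_, T.finite_toSet.image g, ?_, hinj.image_of_comp⟩
  · rw [mem_ball, NonemptyCompacts.dist_eq]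
    linarith
  · rintro _ ⟨t, ht, rfl⟩
    exact (hg t ht).1

end FiniteApproximation

theorem exists_mem_interior_Bdelta_ratGauss_near {U : Set ℂ} (hU : IsOpen U) {φ : ℂ → ℂ}
    (hφd : DifferentiableOn ℂ φ U) (hφi : InjOn φ U) {δ : ℝ} (hδ : 0 < δ) {x : ℂ}
    (hx : x ∈ Bdelta U φ δ) {r : ℝ} (hr : 0 < r) {C : Set ℝ} (hC : C.Finite) :
    ∃ z ∈ interior (Bdelta U φ δ) ∩ ratGauss, φ z ≠ 0 ∧ dist z x < r ∧ ‖φ z‖ ∉ C := by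
  set A : Set ℂ := ball 0 δ ∩ {c | ‖c‖ ∉ insert 0 C}
  have hAopen : IsOpen A :=
    isOpen_ball.inter ((hC.insert 0).isClosed.preimage continuous_norm).isOpen_compl
  have hA : closedBall 0 δ ⊆ closure A := by
    have hdense := dense_setOf_norm_notMem (E := ℂ) (hC.insert 0).countable
    rw [← closure_ball 0 hδ.ne']
    exact closure_minimal (hdense.open_subset_closure_inter isOpen_ball) isClosed_closure
  set G := U ∩ φ ⁻¹' A
  have hGopen : IsOpen G := hφd.continuousOn.isOpen_inter_preimage hU hAopen
  have hGB : G ⊆ Bdelta U φ δ := fun y hy => ⟨hy.1, ball_subset_closedBall hy.2.1⟩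
  have hxU : U ∈ 𝓝 x := hU.mem_nhds hx.1
  have hxG : x ∈ closure G := hU.inter_closure ⟨hx.1, mem_closure_preimage_of_nhds_le_map
      ((hφd.analyticAt hxU).nhds_le_map_nhds_of_injOn hxU hφi) (hA hx.2)⟩
  obtain ⟨z, ⟨hzx, hzG⟩, hzQ⟩ := dense_ratGauss.inter_open_nonempty _
    (isOpen_ball.inter hGopen) (mem_closure_iff.1 hxG _ isOpen_ball (mem_ball_self hr))
  refine ⟨z, ⟨interior_maximal hGB hGopen hzG, hzQ⟩, fun h0 => hzG.2.2 (by simp [h0]), hzx,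
    fun h => hzG.2.2 (mem_insert_of_mem _ h)⟩

theorem Edelta_dense_and_K_interior_open_dense_general
    (z0 : ℂ) (U V : Set ℂ) (hU : IsOpen U)
    (f : ℂ → ℂ) (hfU : MapsTo f U U)
    (p : ℕ) (hp : 2 ≤ p)
    (φ : ℂ → ℂ) (hφd : DifferentiableOn ℂ φ U) (hφb : Set.BijOn φ U V)
    (hφ0 : φ z0 = 0) (hconj : ∀ z ∈ U, φ (f z) = (φ z) ^ p)
    (δ : ℝ) (hδ : 0 < δ) :
    Dense {K : NonemptyCompacts ↥(Bdelta U φ δ) |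
        (K : Set ↥(Bdelta U φ δ)).Finite ∧
        (∀ z ∈ (K : Set ↥(Bdelta U φ δ)),
          (z : ℂ) ∈ (interior (Bdelta U φ δ) \ {z0}) ∩ ratGauss) ∧
        ∀ n : ℕ, Set.InjOn (f^[n]) ((↑) '' (K : Set ↥(Bdelta U φ δ)) : Set ℂ)} ∧
    IsOpen {K : NonemptyCompacts ↥(Bdelta U φ δ) |
        ∀ z ∈ (K : Set ↥(Bdelta U φ δ)), (z : ℂ) ∈ interior (Bdelta U φ δ) \ {z0}} ∧
    Dense {K : NonemptyCompacts ↥(Bdelta U φ δ) |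
        ∀ z ∈ (K : Set ↥(Bdelta U φ δ)), (z : ℂ) ∈ interior (Bdelta U φ δ) \ {z0}} := by
  set B := Bdelta U φ δ
  have hE : Dense {K : NonemptyCompacts B | (K : Set B).Finite ∧
      (K : Set B) ⊆ {z | (z : ℂ) ∈ (interior B \ {z0}) ∩ ratGauss} ∧
      InjOn (fun z : B => ‖φ z‖) K} := by
    refine NonemptyCompacts.dense_setOf_finite_subset_injOn fun x r hr C hC => ?_
    obtain ⟨z, ⟨hzB, hzQ⟩, hz0, hzx, hzC⟩ :=
      exists_mem_interior_Bdelta_ratGauss_near hU hφd hφb.injOn hδ x.2 hr hC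
    have hzz0 : z ≠ z0 := by
      rintro rfl
      exact hz0 hφ0
    exact ⟨⟨z, interior_subset hzB⟩, ⟨⟨hzB, hzz0⟩, hzQ⟩, hzx, hzC⟩
  refine ⟨hE.mono ?_, NonemptyCompacts.isOpen_subsets_of_isOpen
    ((isOpen_interior.sdiff isClosed_singleton).preimage continuous_subtype_val),
    hE.mono fun K hK z hz => (hK.2.1 hz).1⟩
  rintro K ⟨hfin, hKG, hinj⟩
  refine ⟨hfin, hKG, injOn_iterate_of_injOn_norm hfU hconj (by omega) ?_
    (hinj.image_of_comp (g := fun w => ‖φ w‖) (f := Subtype.val))⟩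
  rintro _ ⟨z, -, rfl⟩
  exact z.2.1

/-- Böttcher setting: the collection `E_δ` of finite nonempty subsets of
`(B_δ° ∖ {z0}) ∩ (ℚ+iℚ)` on which every iterate of `f` is injective is dense in
the space `K(B_δ)` of nonempty compact subsets of `B_δ` with the Hausdorff
distance, and the collection `K(B_δ° ∖ {z0})` is open and dense in `K(B_δ)`. -/
theorem Edelta_dense_and_K_interior_open_dense
    (z0 : ℂ) (U V : Set ℂ) (hU : IsOpen U) (hV : IsOpen V)
    (hz0U : z0 ∈ U) (h0V : (0 : ℂ) ∈ V) (hV1 : V ⊆ Metric.ball (0 : ℂ) 1)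
    (f : ℂ → ℂ) (hf : DifferentiableOn ℂ f U) (hfU : MapsTo f U U)
    (hfix : f z0 = z0) (hder : deriv f z0 = 0)
    (hnc : ¬ ∃ c : ℂ, ∀ z ∈ U, f z = c)
    (p : ℕ) (hp : 2 ≤ p)
    (φ : ℂ → ℂ) (hφd : DifferentiableOn ℂ φ U) (hφb : Set.BijOn φ U V)
    (hφ0 : φ z0 = 0) (hconj : ∀ z ∈ U, φ (f z) = (φ z) ^ p)
    (δ : ℝ) (hδ : 0 < δ) (hδV : Metric.closedBall (0 : ℂ) δ ⊆ V) :
    Dense {K : NonemptyCompacts ↥(Bdelta U φ δ) |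
        (K : Set ↥(Bdelta U φ δ)).Finite ∧
        (∀ z ∈ (K : Set ↥(Bdelta U φ δ)),
          (z : ℂ) ∈ (interior (Bdelta U φ δ) \ {z0}) ∩ ratGauss) ∧
        ∀ n : ℕ, Set.InjOn (f^[n]) ((↑) '' (K : Set ↥(Bdelta U φ δ)) : Set ℂ)} ∧
    IsOpen {K : NonemptyCompacts ↥(Bdelta U φ δ) |
        ∀ z ∈ (K : Set ↥(Bdelta U φ δ)), (z : ℂ) ∈ interior (Bdelta U φ δ) \ {z0}} ∧
    Dense {K : NonemptyCompacts ↥(Bdelta U φ δ) |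
        ∀ z ∈ (K : Set ↥(Bdelta U φ δ)), (z : ℂ) ∈ interior (Bdelta U φ δ) \ {z0}} :=
  Edelta_dense_and_K_interior_open_dense_general z0 U V hU f hfU p hp φ hφd hφb hφ0 hconj δ hδ
end
end

section
/- Let X and Y be Baire spaces, let Y be second-countable, and let A ⊂ X × Y. Suppose that for comeager many x ∈ X the section A(x,·) := {y ∈ Y : (x,y) ∈ A} is a G_δ-set in Y, and that for comeager many y ∈ Y the section A(·,y) := {x ∈ X : (x,y) ∈ A} is comeager in X. Then for comeager many x ∈ X the section A(x,·) is comeager in Y. -/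
open Set Filter Topology

/-- Let `X`, `Y` be Baire spaces with `Y` second-countable and `A ⊆ X × Y`.
If for comeager many `x` the section `A(x,·)` is a `G_δ` subset of `Y`, and for
comeager many `y` the section `A(·,y)` is comeager in `X`, then for comeager
many `x` the section `A(x,·)` is comeager in `Y`. -/
theorem comeager_sections_of_Gdelta_sections
    {X Y : Type*} [TopologicalSpace X] [TopologicalSpace Y]
    [BaireSpace X] [BaireSpace Y] [SecondCountableTopology Y]
    (A : Set (X × Y))
    (hGδ : {x : X | IsGδ {y : Y | (x, y) ∈ A}} ∈ residual X)
    (hcomeager : {y : Y | {x : X | (x, y) ∈ A} ∈ residual X} ∈ residual Y) :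
    {x : X | {y : Y | (x, y) ∈ A} ∈ residual Y} ∈ residual X := by
  have hB := TopologicalSpace.isBasis_countableBasis Y
  -- for each basic open set `V`, pick `y V ∈ V` whose vertical section is comeager in `X`
  have key : ∀ V : TopologicalSpace.countableBasis Y,
      ∃ y ∈ (V : Set Y), {x : X | (x, y) ∈ A} ∈ residual X := by
    intro V
    have hVo := TopologicalSpace.isOpen_of_mem_countableBasis V.2
    have hVne := TopologicalSpace.nonempty_of_mem_countableBasis V.2
    obtain ⟨y, hy1, hy2⟩ :=
      (dense_of_mem_residual hcomeager).inter_open_nonempty _ hVo hVne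
    exact ⟨y, hy1, hy2⟩
  choose y hyV hyres using key
  have hT : {x : X | IsGδ {y : Y | (x, y) ∈ A}} ∩
      (⋂ V : TopologicalSpace.countableBasis Y, {x : X | (x, y V) ∈ A}) ∈ residual X :=
    inter_mem hGδ (countable_iInter_mem.2 hyres)
  filter_upwards [hT] with x hx
  obtain ⟨hxGδ, hxsec⟩ := hx
  refine residual_of_dense_Gδ hxGδ (hB.dense_iff.2 fun V hV hVne => ?_)
  exact ⟨y ⟨V, hV⟩, hyV ⟨V, hV⟩, by simpa using mem_iInter.1 hxsec ⟨V, hV⟩⟩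
end

section
/- In the attracting basin setting, for every function g holomorphic on A(z0)∖{z0} and every open set D ⊂ A(z0)∖O^-(z0), one has ω(D, g, f) ⊆ H_Φ(D). -/
open Set Filter Topology Function Metric TopologicalSpace

noncomputable section

/-- The basin of attraction `A(z0)` of `z0` under `f`. -/
def attractingBasin (f : ℂ → ℂ) (z0 : ℂ) : Set ℂ :=
  {z : ℂ | Tendsto (fun n : ℕ => f^[n] z) atTop (𝓝 z0)}

/-- The backward orbit `O⁻(z0)` of `z0` under `f`. -/
def backwardOrbit (f : ℂ → ℂ) (z0 : ℂ) : Set ℂ :=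
  {z : ℂ | ∃ n : ℕ, n ≠ 0 ∧ f^[n] z = z0}

/-- `H_Φ(G) = {ψ ∘ Φ|_G : ψ ∈ H(Φ(G))}` (as functions, constrained on `G` only). -/
def HPhi (Φ : ℂ → ℂ) (G : Set ℂ) : Set (ℂ → ℂ) :=
  {h | ∃ ψ : ℂ → ℂ, DifferentiableOn ℂ ψ (Φ '' G) ∧ Set.EqOn h (ψ ∘ Φ) G}

/-- `ω(G, g, f)`: limits of subsequences of `(g ∘ f^n)` locally uniformly on `G`. -/
def omegaSet (G : Set ℂ) (g f : ℂ → ℂ) : Set (ℂ → ℂ) :=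
  {h | ∃ u : ℕ → ℕ, StrictMono u ∧
    TendstoLocallyUniformlyOn (fun (k : ℕ) (z : ℂ) => g (f^[u k] z)) h atTop G}

/-! Since `Φ` is injective near `z0` and `Φ ∘ f^[n] = λ ^ n * Φ` on the basin, two points of the
basin with the same `Φ`-value have orbits that eventually coincide, so every limit `h` of
`g ∘ f^[u k]` is constant on the fibres of `Φ|_D` and factors as `h = ψ ∘ Φ`. The factor `ψ` is
holomorphic at the image of a non-critical point of `Φ` by local inversion. Critical points of `Φ`
are isolated and `Φ` is an open map near them, because `Φ` is not locally constant on `D` (`D`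
avoids the backward orbit of `z0`); so at a critical value `ψ` is continuous and holomorphic on a
punctured neighbourhood, and the singularity is removable. -/

theorem nhdsNE_le_map_nhdsNE {X Y : Type*} [TopologicalSpace X] [TopologicalSpace Y] {Φ : X → Y}
    {x : X} (h : 𝓝 (Φ x) ≤ map Φ (𝓝 x)) : 𝓝[≠] (Φ x) ≤ map Φ (𝓝[≠] x) :=
  calc 𝓝[≠] (Φ x) ≤ map Φ (𝓝 x) ⊓ 𝓟 {Φ x}ᶜ := inf_le_inf_right _ h
    _ = map Φ (𝓝 x ⊓ 𝓟 (Φ ⁻¹' {Φ x}ᶜ)) := map_inf_principal_preimage.symm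
    _ ≤ map Φ (𝓝[≠] x) :=
      map_mono <| inf_le_inf_left _ <| principal_mono.2 fun _ hy hyx => hy (congrArg Φ hyx)

theorem Function.apply_invFunOn_apply_eq {α β γ : Type*} [Nonempty α] {D : Set α}
    {Φ : α → β} {h : α → γ} (hh : ∀ x ∈ D, ∀ y ∈ D, Φ x = Φ y → h x = h y) {x : α} (hx : x ∈ D) :
    h (invFunOn Φ D (Φ x)) = h x :=
  hh _ (invFunOn_apply_mem hx) _ hx (invFunOn_apply_eq hx)

theorem AnalyticAt.eventually_deriv_ne_zero {Φ : ℂ → ℂ} {z : ℂ} (hΦ : AnalyticAt ℂ Φ z)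
    (hΦc : ¬ ∀ᶠ w in 𝓝 z, Φ w = Φ z) : ∀ᶠ w in 𝓝[≠] z, deriv Φ w ≠ 0 := by
  refine hΦ.deriv.eventually_eq_zero_or_eventually_ne_zero.resolve_left fun h => hΦc ?_
  have : analyticOrderAt (Φ · - Φ z) z = ⊤ := by
    rw [← hΦ.analyticOrderAt_deriv_add_one, analyticOrderAt_eq_top.2 h, top_add]
  simpa only [sub_eq_zero] using analyticOrderAt_eq_top.1 this

theorem HasStrictDerivAt.differentiableAt_of_comp_eventuallyEq {Φ h ψ : ℂ → ℂ} {Φ' ζ : ℂ}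
    (hΦ : HasStrictDerivAt Φ Φ' ζ) (hΦ' : Φ' ≠ 0) (hh : DifferentiableAt ℂ h ζ)
    (hψ : ∀ᶠ w in 𝓝 ζ, ψ (Φ w) = h w) : DifferentiableAt ℂ ψ (Φ ζ) := by
  set L := hΦ.localInverse Φ Φ' ζ hΦ'
  have hL : L (Φ ζ) = ζ := (hΦ.hasStrictFDerivAt_equiv hΦ').localInverse_apply_image
  have hLd : DifferentiableAt ℂ L (Φ ζ) := (hΦ.to_localInverse hΦ').hasDerivAt.differentiableAt
  rw [← hL] at hψ hh
  have hψ_eq : h ∘ L =ᶠ[𝓝 (Φ ζ)] ψ := by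
    filter_upwards [hLd.continuousAt.eventually hψ, hΦ.eventually_right_inverse hΦ']
      with w hw hΦL
    rw [comp_apply, ← hw, hΦL]
  exact hψ_eq.differentiableAt_iff.1 (hh.comp _ hLd)

theorem AnalyticAt.differentiableAt_of_comp_eventuallyEq {Φ h ψ : ℂ → ℂ} {z : ℂ}
    (hΦ : AnalyticAt ℂ Φ z) (hΦc : ¬ ∀ᶠ w in 𝓝 z, Φ w = Φ z) (hh : AnalyticAt ℂ h z)
    (hψ : ∀ᶠ w in 𝓝 z, ψ (Φ w) = h w) : DifferentiableAt ℂ ψ (Φ z) := by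
  have hopen : 𝓝 (Φ z) ≤ map Φ (𝓝 z) :=
    hΦ.eventually_constant_or_nhds_le_map_nhds.resolve_left hΦc
  have hcont : ContinuousAt ψ (Φ z) := by
    have : Tendsto (ψ ∘ Φ) (𝓝 z) (𝓝 (h z)) :=
      hh.continuousAt.congr' (hψ.mono fun w hw => hw.symm)
    rw [ContinuousAt, hψ.self_of_nhds]
    exact (tendsto_map'_iff.2 this).mono_left hopen
  have hnoncrit : ∀ᶠ ζ in 𝓝[≠] z, DifferentiableAt ℂ ψ (Φ ζ) := by
    filter_upwards [hΦ.eventually_deriv_ne_zero hΦc,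
      eventually_nhdsWithin_of_eventually_nhds hΦ.eventually_analyticAt,
      eventually_nhdsWithin_of_eventually_nhds hh.eventually_analyticAt,
      eventually_nhdsWithin_of_eventually_nhds hψ.eventually_nhds] with ζ hΦ'ζ hΦζ hhζ hψζ
    exact hΦζ.hasStrictDerivAt.differentiableAt_of_comp_eventuallyEq hΦ'ζ
      hhζ.differentiableAt hψζ
  exact (Complex.analyticAt_of_differentiable_on_punctured_nhds_of_continuousAt
    (nhdsNE_le_map_nhdsNE hopen hnoncrit) hcont).differentiableAt

section AttractingBasin

variable {f : ℂ → ℂ} {z0 z : ℂ}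

theorem iterate_mem_attractingBasin (hz : z ∈ attractingBasin f z0) (n : ℕ) :
    f^[n] z ∈ attractingBasin f z0 := by
  simpa only [attractingBasin, mem_ofPred_eq, ← iterate_add_apply]
    using (tendsto_add_atTop_iff_nat n).2 hz

theorem mem_attractingBasin_of_iterate_mem {n : ℕ} (hz : f^[n] z ∈ attractingBasin f z0) :
    z ∈ attractingBasin f z0 :=
  (tendsto_add_atTop_iff_nat n).1 <| by simpa only [iterate_add_apply] using hz.out

theorem attractingBasin_eq_iUnion_preimage {U : Set ℂ} (hU : U ∈ 𝓝 z0)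
    (hUA : U ⊆ attractingBasin f z0) : attractingBasin f z0 = ⋃ n, f^[n] ⁻¹' U := by
  ext z
  simp only [mem_iUnion, mem_preimage]
  exact ⟨fun hz => (hz.eventually_mem hU).exists,
    fun ⟨_, hn⟩ => mem_attractingBasin_of_iterate_mem (hUA hn)⟩

theorem isOpen_attractingBasin (hf : Continuous f) {U : Set ℂ} (hU : IsOpen U) (hz0U : z0 ∈ U)
    (hUA : U ⊆ attractingBasin f z0) : IsOpen (attractingBasin f z0) := by
  rw [attractingBasin_eq_iUnion_preimage (hU.mem_nhds hz0U) hUA]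
  exact isOpen_iUnion fun n => hU.preimage (hf.iterate n)

theorem iterate_ne_of_notMem_backwardOrbit (hfix : f z0 = z0) (hz : z ∉ backwardOrbit f z0)
    (n : ℕ) : f^[n] z ≠ z0 := by
  rintro hn
  rcases n with _ | n
  · exact hz ⟨1, one_ne_zero, by rw [iterate_zero_apply] at hn; rwa [iterate_one, hn]⟩
  · exact hz ⟨n + 1, n.succ_ne_zero, hn⟩

variable {Φ : ℂ → ℂ} {c : ℂ} {U : Set ℂ}

theorem apply_iterate_of_conj (hΦ : ∀ z ∈ attractingBasin f z0, Φ (f z) = c * Φ z)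
    (hz : z ∈ attractingBasin f z0) (n : ℕ) : Φ (f^[n] z) = c ^ n * Φ z := by
  induction n with
  | zero => simp
  | succ n ih =>
    rw [iterate_succ_apply', hΦ _ (iterate_mem_attractingBasin hz n), ih]
    ring

theorem iterate_eq_of_apply_eq (hΦ : ∀ z ∈ attractingBasin f z0, Φ (f z) = c * Φ z)
    (hinj : InjOn Φ U) {w : ℂ} (hz : z ∈ attractingBasin f z0) (hw : w ∈ attractingBasin f z0)
    {n : ℕ} (hzn : f^[n] z ∈ U) (hwn : f^[n] w ∈ U) (he : Φ z = Φ w) : f^[n] z = f^[n] w :=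
  hinj hzn hwn <| by rw [apply_iterate_of_conj hΦ hz, apply_iterate_of_conj hΦ hw, he]

theorem eventually_iterate_eq_of_apply_eq (hΦ : ∀ z ∈ attractingBasin f z0, Φ (f z) = c * Φ z)
    (hU : U ∈ 𝓝 z0) (hinj : InjOn Φ U) {w : ℂ} (hz : z ∈ attractingBasin f z0)
    (hw : w ∈ attractingBasin f z0) (he : Φ z = Φ w) : ∀ᶠ n in atTop, f^[n] z = f^[n] w := by
  filter_upwards [hz.eventually_mem hU, hw.eventually_mem hU] with n hzn hwn
  exact iterate_eq_of_apply_eq hΦ hinj hz hw hzn hwn he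

theorem not_eventually_apply_eq (hf : Differentiable ℂ f) (hfix : f z0 = z0)
    (hΦ : ∀ z ∈ attractingBasin f z0, Φ (f z) = c * Φ z) (hU : IsOpen U) (hz0U : z0 ∈ U)
    (hUA : U ⊆ attractingBasin f z0) (hinj : InjOn Φ U) (hz : z ∈ attractingBasin f z0)
    (hzb : z ∉ backwardOrbit f z0) : ¬ ∀ᶠ w in 𝓝 z, Φ w = Φ z := by
  intro hconst
  obtain ⟨N, hNU, hN⟩ := ((hz.eventually_mem (hU.mem_nhds hz0U)).and (eventually_ne_atTop 0)).exists
  have hA := isOpen_attractingBasin hf.continuous hU hz0U hUA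
  have hiter_const : f^[N] =ᶠ[𝓝 z] fun _ => f^[N] z := by
    filter_upwards [hconst, hA.mem_nhds hz,
      (hf.continuous.iterate N).continuousAt.preimage_mem_nhds (hU.mem_nhds hNU)] with w hw hwA hwU
    exact iterate_eq_of_apply_eq hΦ hinj hwA hz hwU hNU hw
  have hiter_z0 : f^[N] z0 = f^[N] z :=
    ((hf.iterate N).differentiableOn.analyticOnNhd isOpen_univ).eqOn_of_preconnected_of_eventuallyEq
      analyticOnNhd_const isPreconnected_univ (mem_univ z) hiter_const (mem_univ z0)
  exact hzb ⟨N, hN, (iterate_fixed hfix N ▸ hiter_z0).symm⟩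

end AttractingBasin

theorem omega_subset_HPhi_general
    (f : ℂ → ℂ) (hf : Differentiable ℂ f)
    (z0 : ℂ) (hfix : f z0 = z0)
    (Φ : ℂ → ℂ) (hΦd : DifferentiableOn ℂ Φ (attractingBasin f z0))
    (hΦconj : ∀ z ∈ attractingBasin f z0, Φ (f z) = deriv f z0 * Φ z)
    (U V : Set ℂ) (hU : IsOpen U) (hz0U : z0 ∈ U)
    (hUA : U ⊆ attractingBasin f z0)
    (hΦU : Set.BijOn Φ U V)
    (g : ℂ → ℂ) (hg : DifferentiableOn ℂ g (attractingBasin f z0 \ {z0}))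
    (D : Set ℂ) (hDopen : IsOpen D)
    (hD : D ⊆ attractingBasin f z0 \ backwardOrbit f z0) :
    omegaSet D g f ⊆ HPhi Φ D := by
  rintro h ⟨u, hu, hlim⟩
  have hA := isOpen_attractingBasin hf.continuous hU hz0U hUA
  have hh : DifferentiableOn ℂ h D := hlim.differentiableOn (Eventually.of_forall fun k =>
    hg.comp (hf.iterate (u k)).differentiableOn fun z hz =>
      ⟨iterate_mem_attractingBasin (hD hz).1 _,
        iterate_ne_of_notMem_backwardOrbit hfix (hD hz).2 _⟩)
    hDopen
  have hfibre : ∀ z ∈ D, ∀ w ∈ D, Φ z = Φ w → h z = h w := by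
    intro z hz w hw he
    have hzw := eventually_iterate_eq_of_apply_eq hΦconj (hU.mem_nhds hz0U) hΦU.injOn
      (hD hz).1 (hD hw).1 he
    exact tendsto_nhds_unique ((hlim.tendsto_at hz).congr' <|
      (hu.tendsto_atTop.eventually hzw).mono fun _ hk => congrArg g hk) (hlim.tendsto_at hw)
  refine ⟨fun w => h (invFunOn Φ D w), ?_, fun z hz => (apply_invFunOn_apply_eq hfibre hz).symm⟩
  rintro _ ⟨z, hz, rfl⟩
  refine DifferentiableAt.differentiableWithinAt <|
    (hΦd.analyticAt (hA.mem_nhds (hD hz).1)).differentiableAt_of_comp_eventuallyEq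
      (not_eventually_apply_eq hf hfix hΦconj hU hz0U hUA hΦU.injOn (hD hz).1 (hD hz).2)
      (hh.analyticAt (hDopen.mem_nhds hz)) ?_
  filter_upwards [hDopen.mem_nhds hz] with w hw
  exact apply_invFunOn_apply_eq hfibre hw

/-- Attracting basin setting: for every `g` holomorphic on `A(z0)∖{z0}` and every
open `D ⊆ A(z0) ∖ O⁻(z0)`, one has `ω(D, g, f) ⊆ H_Φ(D)`. -/
theorem omega_subset_HPhi
    (f : ℂ → ℂ) (hf : Differentiable ℂ f)
    (hnl : ¬ ∃ a b : ℂ, f = fun z => a * z + b)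
    (z0 : ℂ) (hfix : f z0 = z0)
    (hmul_pos : 0 < ‖deriv f z0‖) (hmul_lt : ‖deriv f z0‖ < 1)
    (Φ : ℂ → ℂ) (hΦd : DifferentiableOn ℂ Φ (attractingBasin f z0))
    (hΦconj : ∀ z ∈ attractingBasin f z0, Φ (f z) = deriv f z0 * Φ z)
    (U V : Set ℂ) (hU : IsOpen U) (hV : IsOpen V) (hz0U : z0 ∈ U) (h0V : (0 : ℂ) ∈ V)
    (hUA : U ⊆ attractingBasin f z0) (hfU : MapsTo f U U)
    (hΦU : Set.BijOn Φ U V)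
    (g : ℂ → ℂ) (hg : DifferentiableOn ℂ g (attractingBasin f z0 \ {z0}))
    (D : Set ℂ) (hDopen : IsOpen D)
    (hD : D ⊆ attractingBasin f z0 \ backwardOrbit f z0) :
    omegaSet D g f ⊆ HPhi Φ D :=
  omega_subset_HPhi_general f hf z0 hfix Φ hΦd hΦconj U V hU hz0U hUA hΦU g hg D hDopen hD
end
end
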